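/- Let B = A^T A where A in R^{m x nd}, and partition B into d x d blocks B_{ij}. If A = (1/sqrt(m)) R_Omega V where V is a block-circulant matrix whose block rows are cyclic shifts of (a_n^T, ..., a_1^T) with sum_i ||a_i||_2^2 <= 1, and R_Omega selects m rows, then the sum of the squared Frobenius norms of the diagonal blocks satisfies sum_{i=1}^n ||B_{ii}||_F^2 <= 1/m. -/

import Mathlib

/-!
With `x r = a (r - i)`, the matrix `m • B i = ∑ r ∈ Ω, x r (x r)ᵀ` has squared Frobenius norm
`∑ r, s ∈ Ω, ⟪x r, x s⟫²`, which Cauchy–Schwarz bounds by `c i ^ 2` with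
`c i = ∑ r ∈ Ω, ‖a (r - i)‖²`. Each `c i` is a partial sum of `∑ t, ‖a t‖² ≤ 1`, and summing
over `i` counts every `a t` exactly `m` times, so `∑ i, c i ^ 2 ≤ ∑ i, c i ≤ m`, whence
`∑ i, ‖B i‖_F² ≤ m / m² = 1 / m`.
-/

open Matrix Finset

/-- Frobenius norm squared of a real matrix. -/
noncomputable def frobSq {d : ℕ} (A : Matrix (Fin d) (Fin d) ℝ) : ℝ :=
  ∑ i, ∑ j, (A i j) ^ 2

section Frobenius

variable {α : Type*} {d : ℕ}

lemma frobSq_smul (k : ℝ) (A : Matrix (Fin d) (Fin d) ℝ) :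
    frobSq (k • A) = k ^ 2 * frobSq A := by
  simp only [frobSq, Matrix.smul_apply, smul_eq_mul, mul_pow, mul_sum]

lemma frobSq_sum_vecMulVec_self (Ω : Finset α) (x : α → Fin d → ℝ) :
    frobSq (∑ r ∈ Ω, vecMulVec (x r) (x r)) =
      ∑ r ∈ Ω, ∑ s ∈ Ω, (x r ⬝ᵥ x s) ^ 2 := by
  simp only [frobSq, Matrix.sum_apply, vecMulVec_apply, dotProduct, sq, sum_mul_sum]
  simp_rw [sum_comm (s := (univ : Finset (Fin d))) (t := Ω)]
  exact sum_congr rfl fun r _ => sum_congr rfl fun s _ => sum_congr rfl fun i _ =>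
    sum_congr rfl fun j _ => mul_mul_mul_comm _ _ _ _

lemma frobSq_sum_vecMulVec_self_le (Ω : Finset α) (x : α → EuclideanSpace ℝ (Fin d)) :
    frobSq (∑ r ∈ Ω, vecMulVec ⇑(x r) ⇑(x r)) ≤ (∑ r ∈ Ω, ‖x r‖ ^ 2) ^ 2 := by
  rw [frobSq_sum_vecMulVec_self, sq (∑ r ∈ Ω, _), sum_mul_sum]
  gcongr with r _ s _
  have hinner : ⇑(x r) ⬝ᵥ ⇑(x s) = inner ℝ (x s) (x r) := by
    simp [EuclideanSpace.inner_eq_star_dotProduct]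
  rw [hinner, ← sq_abs, mul_comm, ← mul_pow]
  exact pow_le_pow_left₀ (abs_nonneg _) (abs_real_inner_le_norm _ _) 2

end Frobenius

section Translates

variable {G M : Type*} [AddGroup G] [Fintype G] [AddCommMonoid M]

lemma sum_comp_sub_right_le [PartialOrder M] [IsOrderedAddMonoid M] {g : G → M}
    (hg : 0 ≤ g) (Ω : Finset G) (i : G) : ∑ r ∈ Ω, g (r - i) ≤ ∑ t, g t := by
  calc ∑ r ∈ Ω, g (r - i) = ∑ t ∈ Ω.map (Equiv.subRight i).toEmbedding, g t :=
        (sum_map Ω (Equiv.subRight i).toEmbedding g).symm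
    _ ≤ ∑ t, g t := sum_le_univ_sum_of_nonneg hg

lemma sum_sum_comp_sub (Ω : Finset G) (g : G → M) :
    ∑ i, ∑ r ∈ Ω, g (r - i) = #Ω • ∑ t, g t := by
  calc ∑ i, ∑ r ∈ Ω, g (r - i) = ∑ r ∈ Ω, ∑ t, g t :=
        sum_comm.trans (sum_congr rfl fun r _ => (Equiv.subLeft r).sum_comp g)
    _ = #Ω • ∑ t, g t := sum_const _

end Translates

lemma sum_sq_div_le_inv {ι : Type*} [Fintype ι] {c : ι → ℝ} {m : ℝ}
    (hc0 : ∀ i, 0 ≤ c i) (hc1 : ∀ i, c i ≤ 1) (hsum : ∑ i, c i ≤ m) :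
    ∑ i, (c i / m) ^ 2 ≤ 1 / m := by
  have hsq : ∑ i, c i ^ 2 ≤ ∑ i, c i :=
    sum_le_sum fun i _ => pow_le_of_le_one (hc0 i) (hc1 i) two_ne_zero
  calc ∑ i, (c i / m) ^ 2 = (∑ i, c i ^ 2) / m ^ 2 := by simp only [div_pow, sum_div]
    _ ≤ m / m ^ 2 := by gcongr; exact hsq.trans hsum
    _ = 1 / m := by rw [sq, div_self_mul_self', one_div]

theorem stmt2_general {d n : ℕ} [NeZero n] (a : ZMod n → EuclideanSpace ℝ (Fin d))
    (ha : ∑ i, ‖a i‖ ^ 2 ≤ 1)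
    (V : Matrix (ZMod n) (ZMod n × Fin d) ℝ)
    (hV : ∀ r c j, V r (c, j) = a (r - c) j)
    (Ω : Finset (ZMod n)) (m : ℕ) (hΩ : Ω.card = m)
    (B : ZMod n → Matrix (Fin d) (Fin d) ℝ)
    (hB : ∀ i, B i =
      (1 / (m : ℝ)) • ∑ r ∈ Ω,
        Matrix.vecMulVec (fun j => V r (i, j)) (fun j => V r (i, j))) :
    ∑ i, frobSq (B i) ≤ 1 / (m : ℝ) := by
  set c : ZMod n → ℝ := fun i => ∑ r ∈ Ω, ‖a (r - i)‖ ^ 2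
  have hsq_nonneg : 0 ≤ fun t => ‖a t‖ ^ 2 := fun t => sq_nonneg _
  have hBc : ∀ i, frobSq (B i) ≤ (c i / m) ^ 2 := fun i => by
    have hrow : ∀ r, (fun j => V r (i, j)) = ⇑(a (r - i)) := fun r => funext (hV r i)
    simp only [hB, hrow, frobSq_smul, div_pow, one_div, inv_pow, ← div_eq_inv_mul]
    gcongr
    exact frobSq_sum_vecMulVec_self_le Ω fun r => a (r - i)
  have hc_le_one : ∀ i, c i ≤ 1 := fun i => (sum_comp_sub_right_le hsq_nonneg Ω i).trans ha
  have hc_sum : ∑ i, c i ≤ m := by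
    rw [sum_sum_comp_sub Ω fun t => ‖a t‖ ^ 2, hΩ, nsmul_eq_mul]
    exact mul_le_of_le_one_right m.cast_nonneg ha
  exact (sum_le_sum fun i _ => hBc i).trans
    (sum_sq_div_le_inv (fun i => sum_nonneg fun r _ => hsq_nonneg _) hc_le_one hc_sum)

/-- Let `V ∈ ℝ^{n × nd}` be the block-circulant matrix generated by blocks
`a_1, …, a_n ∈ ℝ^d` of a vector with `∑ i ‖a_i‖² ≤ 1` (so the block in
row `r` and block-column `c` is `a_{r-c}ᵀ`, with indices in `ZMod n`).
If `Ω ⊆ [n]` has `|Ω| = m`, then the diagonal blocks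
`B_{ii} = (1/m) ∑_{j ∈ Ω} (V^i_j)ᵀ V^i_j` of `B = AᵀA`, where
`A = (1/√m) R_Ω V`, satisfy `∑ i ‖B_{ii}‖_F² ≤ 1/m`. -/
theorem stmt2 {d n : ℕ} [NeZero n] (a : ZMod n → EuclideanSpace ℝ (Fin d))
    (ha : ∑ i, ‖a i‖ ^ 2 ≤ 1)
    (V : Matrix (ZMod n) (ZMod n × Fin d) ℝ)
    (hV : ∀ r c j, V r (c, j) = a (r - c) j)
    (Ω : Finset (ZMod n)) (m : ℕ) (hm : 0 < m) (hΩ : Ω.card = m)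
    (B : ZMod n → Matrix (Fin d) (Fin d) ℝ)
    (hB : ∀ i, B i =
      (1 / (m : ℝ)) • ∑ r ∈ Ω,
        Matrix.vecMulVec (fun j => V r (i, j)) (fun j => V r (i, j))) :
    ∑ i, frobSq (B i) ≤ 1 / (m : ℝ) :=
  stmt2_general a ha V hV Ω m hΩ B hB
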